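/- In the Khovanov-Seidel algebra Q_m, the center Z(Q_m) for m > 0 contains all loops ε_1, ..., ε_m: each ε_i commutes with every element of Q_m (in fact ε_i x = 0 = x ε_i for every arrow x, and ε_i e_j = δ_{ij} ε_i = e_j ε_i). -/

import Mathlib

/-- Generators of the Khovanov–Seidel quiver with vertices `0, …, m`:
idempotents `e i`, arrows `u i : i → i+1` (for `0 ≤ i ≤ m-1`, encoded by
`i : Fin m`) and arrows `d i` which encode `d_{i+1} : i+1 → i` (for
`i : Fin m`). -/
inductive KSGen (m : ℕ) : Type
  | e : Fin (m + 1) → KSGen m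
  | u : Fin m → KSGen m
  | d : Fin m → KSGen m

namespace KS

variable (K : Type*) [Field K] (m : ℕ)

open FreeAlgebra

/-- The quiver (path-algebra) relations together with the Khovanov–Seidel
relations `u_i u_{i-1} = 0`, `d_i d_{i+1} = 0`, `d_{i+1} u_i = u_{i-1} d_i` and
the dead-end relation `d_1 u_0 = 0`.  Paths compose right-to-left. -/
inductive Rel : FreeAlgebra K (KSGen m) → FreeAlgebra K (KSGen m) → Prop
  | e_mul (i j : Fin (m + 1)) :
      Rel (ι K (.e i) * ι K (.e j)) (if i = j then ι K (.e i) else 0)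
  | one : Rel (∑ i : Fin (m + 1), ι K (KSGen.e i)) 1
  | u_src (i : Fin m) : Rel (ι K (.u i) * ι K (.e i.castSucc)) (ι K (.u i))
  | u_src' (i : Fin m) (j : Fin (m + 1)) (h : j ≠ i.castSucc) :
      Rel (ι K (.u i) * ι K (.e j)) 0
  | u_tgt (i : Fin m) : Rel (ι K (.e i.succ) * ι K (.u i)) (ι K (.u i))
  | u_tgt' (i : Fin m) (j : Fin (m + 1)) (h : j ≠ i.succ) :
      Rel (ι K (.e j) * ι K (.u i)) 0
  | d_src (i : Fin m) : Rel (ι K (.d i) * ι K (.e i.succ)) (ι K (.d i))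
  | d_src' (i : Fin m) (j : Fin (m + 1)) (h : j ≠ i.succ) :
      Rel (ι K (.d i) * ι K (.e j)) 0
  | d_tgt (i : Fin m) : Rel (ι K (.e i.castSucc) * ι K (.d i)) (ι K (.d i))
  | d_tgt' (i : Fin m) (j : Fin (m + 1)) (h : j ≠ i.castSucc) :
      Rel (ι K (.e j) * ι K (.d i)) 0
  | uu (i j : Fin m) (h : (i : ℕ) = (j : ℕ) + 1) :
      Rel (ι K (.u i) * ι K (.u j)) 0
  | dd (i j : Fin m) (h : (i : ℕ) = (j : ℕ) + 1) :
      Rel (ι K (.d j) * ι K (.d i)) 0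
  | du (i j : Fin m) (h : (i : ℕ) = (j : ℕ) + 1) :
      Rel (ι K (.d i) * ι K (.u i)) (ι K (.u j) * ι K (.d j))
  | deadend (i : Fin m) (h : (i : ℕ) = 0) : Rel (ι K (.d i) * ι K (.u i)) 0

/-- The Khovanov–Seidel quiver algebra `Q_m`. -/
abbrev Qm := RingQuot (Rel K m)

/-- The idempotent (length-zero path) at vertex `i`. -/
noncomputable def eQ (i : Fin (m + 1)) : Qm K m :=
  RingQuot.mkAlgHom K (Rel K m) (ι K (.e i))

/-- The arrow `u_i : i → i+1` (for `i : Fin m`). -/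
noncomputable def uQ (i : Fin m) : Qm K m :=
  RingQuot.mkAlgHom K (Rel K m) (ι K (.u i))

/-- The arrow `d_{i+1} : i+1 → i` (for `i : Fin m`). -/
noncomputable def dQ (i : Fin m) : Qm K m :=
  RingQuot.mkAlgHom K (Rel K m) (ι K (.d i))

/-- The loop `ε_{i+1} = u_i d_{i+1}` at the vertex `i+1` (for `i : Fin m`). -/
noncomputable def epsQ (i : Fin m) : Qm K m := uQ K m i * dQ K m i

/-- An element is an arrow if it is one of the `u_i` or `d_i`. -/
def IsArrow (x : Qm K m) : Prop :=
  (∃ i, x = uQ K m i) ∨ (∃ i, x = dQ K m i)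

/-- The degree-`n` component of the path-length grading on `Q_m`: the span of
paths of length `n`, i.e. of products `e_i · a_n ⋯ a_1` of an idempotent with
`n` arrows. -/
noncomputable def grade (n : ℕ) : Submodule K (Qm K m) :=
  Submodule.span K
    {x | ∃ (i : Fin (m + 1)) (L : List (Qm K m)),
      (∀ a ∈ L, IsArrow K m a) ∧ L.length = n ∧ x = eQ K m i * L.prod}

/-- The path-length grading extended to integer degrees (zero in negative
degrees). -/
noncomputable def gradeZ (n : ℤ) : Submodule K (Qm K m) :=
  if 0 ≤ n then grade K m n.toNat else ⊥

end KS

/-! Any two consecutive arrows pointing the same way compose to zero: either the relation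
`u_i u_{i-1} = 0` (resp. `d_i d_{i+1} = 0`) applies or their endpoints do not match. This kills
`u ε_i = u u_{i-1} d_i` and `ε_i d = u_{i-1} d_i d` at once. In `ε_i u` and `d ε_i` the only
candidates with matching endpoints are `u = u_{i-1}` and `d = d_i`, and then the middle loop
`d_i u_{i-1}` is zero for `i = 1` and equals `u_{i-2} d_{i-1}` otherwise, which again produces
`u u` or `d d`. Being a loop at vertex `i`, `ε_i` also commutes with the idempotents, hence with
all generators of `Q_m`. -/

theorem mul_eq_zero_of_mul_eq_self_of_mul_eq_self {R : Type*} [SemigroupWithZero R]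
    {x y e f : R} (hx : x * e = x) (hy : f * y = y) (hef : e * f = 0) : x * y = 0 := by
  rw [← hx, ← hy, mul_assoc, ← mul_assoc e, hef, zero_mul, mul_zero]

theorem RingQuot.commute_of_forall_commute_mkAlgHom_ι {R X : Type*} [CommSemiring R]
    {r : FreeAlgebra R X → FreeAlgebra R X → Prop} {x : RingQuot r}
    (hx : ∀ g, Commute x (RingQuot.mkAlgHom R r (FreeAlgebra.ι R g))) (y : RingQuot r) :
    Commute x y := by
  obtain ⟨y, rfl⟩ := RingQuot.mkAlgHom_surjective R r y
  induction y using FreeAlgebra.induction with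
  | grade0 c => simpa using Algebra.commute_algebraMap_right c x
  | grade1 g => exact hx g
  | mul a b ha hb => simpa using ha.mul_right hb
  | add a b ha hb => simpa using ha.add_right hb

namespace KS

variable {K : Type*} [Field K] {m : ℕ}

theorem eQ_mul_eQ_of_ne {i j : Fin (m + 1)} (h : i ≠ j) : eQ K m i * eQ K m j = 0 := by
  simpa [eQ, h] using RingQuot.mkAlgHom_rel K (Rel.e_mul (K := K) i j)

theorem eQ_mul_uQ (v : Fin (m + 1)) (i : Fin m) :
    eQ K m v * uQ K m i = if v = i.succ then uQ K m i else 0 := by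
  split_ifs with h
  · subst h
    simpa [eQ, uQ] using RingQuot.mkAlgHom_rel K (Rel.u_tgt (K := K) i)
  · simpa [eQ, uQ] using RingQuot.mkAlgHom_rel K (Rel.u_tgt' (K := K) i v h)

theorem dQ_mul_eQ (i : Fin m) (v : Fin (m + 1)) :
    dQ K m i * eQ K m v = if v = i.succ then dQ K m i else 0 := by
  split_ifs with h
  · subst h
    simpa [eQ, dQ] using RingQuot.mkAlgHom_rel K (Rel.d_src (K := K) i)
  · simpa [eQ, dQ] using RingQuot.mkAlgHom_rel K (Rel.d_src' (K := K) i v h)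

theorem eQ_succ_mul_uQ (i : Fin m) : eQ K m i.succ * uQ K m i = uQ K m i := by
  simp [eQ_mul_uQ]

theorem dQ_mul_eQ_succ (i : Fin m) : dQ K m i * eQ K m i.succ = dQ K m i := by
  simp [dQ_mul_eQ]

theorem uQ_mul_eQ_castSucc (i : Fin m) : uQ K m i * eQ K m i.castSucc = uQ K m i := by
  simpa [eQ, uQ] using RingQuot.mkAlgHom_rel K (Rel.u_src (K := K) i)

theorem eQ_castSucc_mul_dQ (i : Fin m) : eQ K m i.castSucc * dQ K m i = dQ K m i := by
  simpa [eQ, dQ] using RingQuot.mkAlgHom_rel K (Rel.d_tgt (K := K) i)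

theorem uQ_mul_uQ (i j : Fin m) : uQ K m i * uQ K m j = 0 := by
  by_cases h : (i : ℕ) = j + 1
  · simpa [uQ] using RingQuot.mkAlgHom_rel K (Rel.uu (K := K) i j h)
  · refine mul_eq_zero_of_mul_eq_self_of_mul_eq_self (uQ_mul_eQ_castSucc i)
      (eQ_succ_mul_uQ j) (eQ_mul_eQ_of_ne ?_)
    simpa [Fin.ext_iff] using h

theorem dQ_mul_dQ (i j : Fin m) : dQ K m i * dQ K m j = 0 := by
  by_cases h : (j : ℕ) = i + 1
  · simpa [dQ] using RingQuot.mkAlgHom_rel K (Rel.dd (K := K) j i h)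
  · refine mul_eq_zero_of_mul_eq_self_of_mul_eq_self (dQ_mul_eQ_succ i)
      (eQ_castSucc_mul_dQ j) (eQ_mul_eQ_of_ne ?_)
    simpa [Fin.ext_iff, eq_comm] using h

theorem dQ_mul_uQ_of_ne {i j : Fin m} (h : i ≠ j) : dQ K m i * uQ K m j = 0 :=
  mul_eq_zero_of_mul_eq_self_of_mul_eq_self (dQ_mul_eQ_succ i) (eQ_succ_mul_uQ j)
    (eQ_mul_eQ_of_ne (Fin.succ_injective m |>.ne h))

theorem dQ_mul_uQ_self_eq_zero_or (i : Fin m) :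
    dQ K m i * uQ K m i = 0 ∨ ∃ k : Fin m, dQ K m i * uQ K m i = uQ K m k * dQ K m k := by
  by_cases hi : (i : ℕ) = 0
  · refine .inl ?_
    simpa [dQ, uQ] using RingQuot.mkAlgHom_rel K (Rel.deadend (K := K) i hi)
  · let k : Fin m := ⟨i - 1, by omega⟩
    have hik : (i : ℕ) = k + 1 := by simp only [k]; omega
    refine .inr ⟨k, ?_⟩
    simpa [dQ, uQ] using RingQuot.mkAlgHom_rel K (Rel.du (K := K) i k hik)

theorem epsQ_mul_uQ (j i : Fin m) : epsQ K m j * uQ K m i = 0 := by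
  rw [epsQ, mul_assoc]
  obtain rfl | hij := eq_or_ne j i
  · obtain hdu | ⟨k, hdu⟩ := dQ_mul_uQ_self_eq_zero_or (K := K) j
    · rw [hdu, mul_zero]
    · rw [hdu, ← mul_assoc, uQ_mul_uQ, zero_mul]
  · rw [dQ_mul_uQ_of_ne hij, mul_zero]

theorem dQ_mul_epsQ (j i : Fin m) : dQ K m i * epsQ K m j = 0 := by
  rw [epsQ, ← mul_assoc]
  obtain rfl | hij := eq_or_ne i j
  · obtain hdu | ⟨k, hdu⟩ := dQ_mul_uQ_self_eq_zero_or (K := K) i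
    · rw [hdu, zero_mul]
    · rw [hdu, mul_assoc, dQ_mul_dQ, mul_zero]
  · rw [dQ_mul_uQ_of_ne hij, zero_mul]

theorem uQ_mul_epsQ (j i : Fin m) : uQ K m i * epsQ K m j = 0 := by
  rw [epsQ, ← mul_assoc, uQ_mul_uQ, zero_mul]

theorem epsQ_mul_dQ (j i : Fin m) : epsQ K m j * dQ K m i = 0 := by
  rw [epsQ, mul_assoc, dQ_mul_dQ, mul_zero]

theorem epsQ_mul_eQ (j : Fin m) (v : Fin (m + 1)) :
    epsQ K m j * eQ K m v = if (v : ℕ) = j + 1 then epsQ K m j else 0 := by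
  simp only [epsQ, mul_assoc, dQ_mul_eQ, Fin.ext_iff, Fin.val_succ]
  split_ifs <;> simp

theorem eQ_mul_epsQ (j : Fin m) (v : Fin (m + 1)) :
    eQ K m v * epsQ K m j = if (v : ℕ) = j + 1 then epsQ K m j else 0 := by
  simp only [epsQ, ← mul_assoc, eQ_mul_uQ, Fin.ext_iff, Fin.val_succ]
  split_ifs <;> simp

theorem commute_epsQ (j : Fin m) (x : Qm K m) : Commute (epsQ K m j) x := by
  refine RingQuot.commute_of_forall_commute_mkAlgHom_ι (fun g => ?_) x
  cases g with
  | e v => exact (epsQ_mul_eQ j v).trans (eQ_mul_epsQ j v).symm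
  | u i => exact (epsQ_mul_uQ j i).trans (uQ_mul_epsQ j i).symm
  | d i => exact (epsQ_mul_dQ j i).trans (dQ_mul_epsQ j i).symm

end KS

open KS in
/-- **The loops are central in `Q_m`.**
For `m > 0` every loop `ε_i = u_{i-1} d_i` (here `ε_{j+1} = epsQ j` for
`j : Fin m`) lies in the center of `Q_m`: it commutes with every element.  In
fact `ε_i x = 0 = x ε_i` for every arrow `x`, and
`ε_i e_v = δ_{i v} ε_i = e_v ε_i` for every vertex idempotent `e_v`. -/
theorem epsQ_central (K : Type*) [Field K] (m : ℕ) (j : Fin m) :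
    (∀ x : Qm K m, epsQ K m j * x = x * epsQ K m j) ∧
    (∀ x : Qm K m, IsArrow K m x → epsQ K m j * x = 0 ∧ x * epsQ K m j = 0) ∧
    (∀ v : Fin (m + 1),
      epsQ K m j * eQ K m v = (if (v : ℕ) = (j : ℕ) + 1 then epsQ K m j else 0) ∧
      eQ K m v * epsQ K m j = (if (v : ℕ) = (j : ℕ) + 1 then epsQ K m j else 0)) := by
  refine ⟨commute_epsQ j, ?_, fun v => ⟨epsQ_mul_eQ j v, eQ_mul_epsQ j v⟩⟩
  rintro x (⟨i, rfl⟩ | ⟨i, rfl⟩)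
  · exact ⟨epsQ_mul_uQ j i, uQ_mul_epsQ j i⟩
  · exact ⟨epsQ_mul_dQ j i, dQ_mul_epsQ j i⟩
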